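/- For n ≥ 1, γ_rdR(P_n ⊙ K₁) = ⌈7n/3⌉ if n ≡ 1 (mod 3), and ⌈7n/3⌉ + 1 if n ≡ 0 or 2 (mod 3). -/

import Mathlib

open SimpleGraph Finset

/-- A restrained double Roman dominating function. -/
def IsRDRD {α : Type*} (G : SimpleGraph α) (f : α → ℕ) : Prop :=
  (∀ v, f v ≤ 3) ∧
  (∀ v, f v = 0 →
    (∃ u, G.Adj v u ∧ f u = 3) ∨
    (∃ u w, u ≠ w ∧ G.Adj v u ∧ G.Adj v w ∧ f u = 2 ∧ f w = 2)) ∧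
  (∀ v, f v = 1 → ∃ u, G.Adj v u ∧ 2 ≤ f u) ∧
  (∀ v, f v = 0 → ∃ u, G.Adj v u ∧ f u = 0)

/-- The restrained double Roman domination number. -/
noncomputable def gammaRdR {α : Type*} (G : SimpleGraph α) [Fintype α] : ℕ :=
  sInf {w | ∃ f, IsRDRD G f ∧ ∑ v, f v = w}

/-- The strong product of two simple graphs. -/
def strongProd {α β : Type*} (G : SimpleGraph α) (H : SimpleGraph β) :
    SimpleGraph (α × β) where
  Adj p q := p ≠ q ∧ (G.Adj p.1 q.1 ∨ p.1 = q.1) ∧ (H.Adj p.2 q.2 ∨ p.2 = q.2)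
  symm := by
    constructor
    rintro p q ⟨h1, h2, h3⟩
    exact ⟨h1.symm, h2.imp (fun h => G.adj_symm h) Eq.symm, h3.imp (fun h => H.adj_symm h) Eq.symm⟩
  loopless := by constructor; rintro p ⟨h1, _⟩; exact h1 rfl

/-- The cardinal (direct/tensor) product of two simple graphs. -/
def cardProd {α β : Type*} (G : SimpleGraph α) (H : SimpleGraph β) :
    SimpleGraph (α × β) where
  Adj p q := G.Adj p.1 q.1 ∧ H.Adj p.2 q.2
  symm := by constructor; rintro p q ⟨h1, h2⟩; exact ⟨h1.symm, h2.symm⟩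
  loopless := by constructor; rintro p ⟨h1, _⟩; exact G.irrefl h1

/-- The corona of two simple graphs. -/
def corona {α β : Type*} (G : SimpleGraph α) (H : SimpleGraph β) :
    SimpleGraph (α ⊕ α × β) where
  Adj x y :=
    match x, y with
    | .inl u, .inl v => G.Adj u v
    | .inl u, .inr (v, _) => u = v
    | .inr (v, _), .inl u => u = v
    | .inr (u, a), .inr (v, b) => u = v ∧ H.Adj a b
  symm := by
    constructor
    rintro (u | ⟨u, a⟩) (v | ⟨v, b⟩) h
    · exact h.symm
    · exact h
    · exact h
    · exact ⟨h.1.symm, h.2.symm⟩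
  loopless := by
    constructor
    rintro (u | ⟨u, a⟩) h
    · exact G.irrefl h
    · exact H.irrefl h.2

/-! A vertex `v` of the path and its pendant together carry weight at least 2 under any RDRD-function
`f` of `Pₙ ⊙ K₁`, and weight exactly 2 forces `f v = 0` with the pendant at 2; then `v` needs a
spine neighbour of value 0 and a different one of value at least 2. So the first and last pairs
weigh at least 3, and among three consecutive pairs one weighs at least 3, whence the total is at
least `3 + ⌈7(n - 1)/3⌉`. Conversely, putting 2 on every third spine vertex (starting with the
first), 1 on its pendant and 2 on every other pendant, then patching the last pair to weight 3,
attains this bound. -/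

section Corona

variable {α β : Type*} {G : SimpleGraph α}

lemma corona_bot_adj_inr {v : α} {b : β} {x : α ⊕ α × β} :
    (corona G (⊥ : SimpleGraph β)).Adj (.inr (v, b)) x ↔ x = .inl v := by
  rcases x with u | ⟨u, c⟩
  · exact ⟨fun h => congrArg Sum.inl h, fun h => Sum.inl_injective h⟩
  · simp [corona]

lemma corona_adj_inl {H : SimpleGraph β} {v : α} {x : α ⊕ α × β}
    (h : (corona G H).Adj (.inl v) x) :
    (∃ u, x = .inl u ∧ G.Adj v u) ∨ ∃ b, x = .inr (v, b) := by
  rcases x with u | ⟨u, b⟩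
  · exact .inl ⟨u, rfl, h⟩
  · exact .inr ⟨b, by rw [show v = u from h]⟩

def pairWeight (f : α ⊕ α × Fin 1 → ℕ) (v : α) : ℕ := f (.inl v) + f (.inr (v, 0))

lemma sum_eq_sum_pairWeight [Fintype α] (f : α ⊕ α × Fin 1 → ℕ) :
    ∑ x, f x = ∑ v, pairWeight f v := by
  rw [Fintype.sum_sum_type, Fintype.sum_prod_type, ← Finset.sum_add_distrib]
  simp only [Fin.sum_univ_one, pairWeight]

end Corona

lemma gammaRdR_eq_of_forall_le {α : Type*} [Fintype α] {G : SimpleGraph α} {w : ℕ}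
    (hex : ∃ f, IsRDRD G f ∧ ∑ v, f v = w) (hle : ∀ f, IsRDRD G f → w ≤ ∑ v, f v) :
    gammaRdR G = w :=
  le_antisymm (Nat.sInf_le hex) (le_csInf ⟨w, hex⟩ fun _ ⟨f, hf, hw⟩ => hw ▸ hle f hf)

namespace IsRDRD

variable {α β : Type*} {G : SimpleGraph α}

section Pendant

variable {f : α ⊕ α × β → ℕ} (hf : IsRDRD (corona G (⊥ : SimpleGraph β)) f)
include hf

lemma one_le_pendant (v : α) (b : β) : 1 ≤ f (.inr (v, b)) := by
  by_contra! h
  replace h : f (.inr (v, b)) = 0 := by omega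
  obtain ⟨u, hu, hu0⟩ := hf.2.2.2 _ h
  rw [corona_bot_adj_inr.1 hu] at hu0
  rcases hf.2.1 _ h with ⟨u, hu, hu3⟩ | ⟨u, w, huw, hu, hw, -, -⟩
  · rw [corona_bot_adj_inr.1 hu] at hu3
    omega
  · exact huw ((corona_bot_adj_inr.1 hu).trans (corona_bot_adj_inr.1 hw).symm)

lemma two_le_of_pendant_eq_one {v : α} {b : β} (h : f (.inr (v, b)) = 1) : 2 ≤ f (.inl v) := by
  obtain ⟨u, hu, h2⟩ := hf.2.2.1 _ h
  rwa [corona_bot_adj_inr.1 hu] at h2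

end Pendant

variable {f : α ⊕ α × Fin 1 → ℕ} (hf : IsRDRD (corona G (⊥ : SimpleGraph (Fin 1))) f)
include hf

lemma two_le_pairWeight (v : α) : 2 ≤ pairWeight f v := by
  have := hf.one_le_pendant v 0
  have := fun h => hf.two_le_of_pendant_eq_one (v := v) (b := 0) h
  unfold pairWeight
  omega

lemma eq_zero_and_eq_two_of_pairWeight_lt_three (v : α) (hv : pairWeight f v < 3) :
    f (.inl v) = 0 ∧ f (.inr (v, 0)) = 2 := by
  have := hf.one_le_pendant v 0
  have := fun h => hf.two_le_of_pendant_eq_one (v := v) (b := 0) h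
  unfold pairWeight at hv
  omega

lemma exists_adj_of_pairWeight_lt_three (v : α) (hv : pairWeight f v < 3) :
    ∃ u w, G.Adj v u ∧ G.Adj v w ∧ f (.inl u) = 0 ∧ 2 ≤ f (.inl w) := by
  obtain ⟨hv0, hv2⟩ := hf.eq_zero_and_eq_two_of_pairWeight_lt_three v hv
  have spine_of_ne_pendant : ∀ x, (corona G (⊥ : SimpleGraph (Fin 1))).Adj (.inl v) x →
      x ≠ .inr (v, 0) → ∃ u, x = .inl u ∧ G.Adj v u := by
    intro x hx hne
    rcases corona_adj_inl hx with hu | ⟨b, rfl⟩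
    · exact hu
    · exact absurd (by rw [Subsingleton.elim b 0]) hne
  obtain ⟨x, hx, hx0⟩ := hf.2.2.2 _ hv0
  obtain ⟨u, rfl, hu⟩ := spine_of_ne_pendant x hx (by rintro rfl; omega)
  suffices ∃ y, (corona G (⊥ : SimpleGraph (Fin 1))).Adj (.inl v) y ∧ y ≠ .inr (v, 0) ∧ 2 ≤ f y by
    obtain ⟨y, hy, hne, hy2⟩ := this
    obtain ⟨w, rfl, hw⟩ := spine_of_ne_pendant y hy hne
    exact ⟨u, w, hu, hw, hx0, hy2⟩
  rcases hf.2.1 _ hv0 with ⟨y, hy, hy3⟩ | ⟨y, z, hyz, hy, hz, hy2, hz2⟩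
  · exact ⟨y, hy, by rintro rfl; omega, by omega⟩
  · by_cases hy' : y = .inr (v, 0)
    · exact ⟨z, hz, fun h => hyz (hy'.trans h.symm), by omega⟩
    · exact ⟨y, hy, hy', by omega⟩

end IsRDRD

lemma isRDRD_corona_sumElim {α : Type*} {G : SimpleGraph α} {s p : α → ℕ}
    (hs : ∀ v, s v ≤ 3) (hp : ∀ v, 1 ≤ p v ∧ p v ≤ 3)
    (hs1 : ∀ v, s v = 1 → 2 ≤ p v) (hp1 : ∀ v, p v = 1 → 2 ≤ s v)
    (hdom : ∀ v, s v = 0 → p v = 3 ∨ p v = 2 ∧ ∃ u, G.Adj v u ∧ s u = 2)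
    (hres : ∀ v, s v = 0 → ∃ u, G.Adj v u ∧ s u = 0) :
    IsRDRD (corona G (⊥ : SimpleGraph (Fin 1))) (Sum.elim s fun x => p x.1) := by
  have pendant_ne_zero : ∀ v, p v ≠ 0 := fun v => by have := (hp v).1; omega
  refine ⟨?_, ?_, ?_, ?_⟩
  · rintro (v | ⟨v, _⟩)
    exacts [hs v, (hp v).2]
  · rintro (v | ⟨v, _⟩) h0
    · rcases hdom v h0 with h3 | ⟨h2, u, hu, hu2⟩
      · exact .inl ⟨.inr (v, 0), rfl, h3⟩
      · exact .inr ⟨.inl u, .inr (v, 0), Sum.inl_ne_inr, hu, rfl, hu2, h2⟩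
    · exact absurd h0 (pendant_ne_zero v)
  · rintro (v | ⟨v, _⟩) h1
    exacts [⟨.inr (v, 0), rfl, hs1 v h1⟩, ⟨.inl v, rfl, hp1 v h1⟩]
  · rintro (v | ⟨v, _⟩) h0
    · obtain ⟨u, hu, hu0⟩ := hres v h0
      exact ⟨.inl u, hu, hu0⟩
    · exact absurd h0 (pendant_ne_zero v)

lemma seven_mul_add_two_div_three_le_sum_range {c : ℕ → ℕ} :
    ∀ {n : ℕ}, (∀ i < n, 2 ≤ c i) → (∀ i, i + 2 < n → 3 ≤ c i ∨ 3 ≤ c (i + 1) ∨ 3 ≤ c (i + 2)) →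
      (0 < n → 3 ≤ c (n - 1)) → (7 * n + 2) / 3 ≤ ∑ i ∈ range n, c i
  | 0, _, _, _ => by simp
  | 1, _, _, hlast => by simpa using hlast one_pos
  | 2, h2, _, hlast => by
    have h0 : 2 ≤ c 0 := h2 0 two_pos
    have h1 : 3 ≤ c 1 := hlast two_pos
    simp only [sum_range_succ, sum_range_zero]
    omega
  | m + 3, h2, hwin, hlast => by
    have ih : (7 * m + 2) / 3 ≤ ∑ i ∈ range m, c (i + 3) :=
      seven_mul_add_two_div_three_le_sum_range (c := fun i => c (i + 3))
      (fun i hi => h2 (i + 3) (by omega)) (fun i hi => hwin (i + 3) (by omega))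
      (fun hm => by simpa [show m - 1 + 3 = m + 3 - 1 by omega] using hlast (by omega))
    have h2₀ := h2 0 (by omega)
    have h2₁ := h2 1 (by omega)
    have h2₂ := h2 2 (by omega)
    have hwin0 : 3 ≤ c 0 ∨ 3 ≤ c 1 ∨ 3 ≤ c 2 := hwin 0 (by omega)
    have hsum : ∑ i ∈ range (m + 3), c i = ∑ i ∈ range m, c (i + 3) + c 2 + c 1 + c 0 := by
      rw [sum_range_succ' c (m + 2), sum_range_succ' _ (m + 1), sum_range_succ' _ m]
    omega

lemma sum_range_ite_mod_three (k : ℕ) :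
    ∑ m ∈ range k, (if m % 3 = 0 then 3 else 2) = (7 * k + 2) / 3 := by
  induction k with
  | zero => rfl
  | succ k ih =>
    rw [sum_range_succ, ih]
    have : k % 3 = 0 ∨ k % 3 = 1 ∨ k % 3 = 2 := by omega
    split_ifs <;> omega

namespace IsRDRD

variable {n : ℕ} {f : Fin n ⊕ Fin n × Fin 1 → ℕ}
  (hf : IsRDRD (corona (pathGraph n) (⊥ : SimpleGraph (Fin 1))) f)
include hf

lemma pathGraph_exists_heavy_neighbor (i : Fin n) (hi : pairWeight f i < 3) :
    ∃ j k : Fin n, j.val + 1 = i.val ∧ i.val + 1 = k.val ∧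
      (3 ≤ pairWeight f j ∨ 3 ≤ pairWeight f k) := by
  obtain ⟨u, w, hu, hw, hu0, hw2⟩ := hf.exists_adj_of_pairWeight_lt_three i hi
  have hw3 : 3 ≤ pairWeight f w := by
    have := hf.one_le_pendant w 0
    unfold pairWeight
    omega
  have hne : u.val ≠ w.val := fun h => by rw [Fin.ext h] at hu0; omega
  rcases pathGraph_adj.1 hu with hu | hu <;> rcases pathGraph_adj.1 hw with hw | hw
  · omega
  · exact ⟨w, u, hw, hu, .inl hw3⟩
  · exact ⟨u, w, hu, hw, .inr hw3⟩
  · omega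

lemma pathGraph_le_sum (hn : 1 ≤ n) :
    (if n % 3 = 1 then (7 * n + 2) / 3 else (7 * n + 2) / 3 + 1) ≤ ∑ v, f v := by
  set c : ℕ → ℕ := fun m => if h : m < n then pairWeight f ⟨m, h⟩ else 0
  have hcf : ∀ i : Fin n, c i = pairWeight f i := fun i => dif_pos i.isLt
  have hsum : ∑ v, f v = ∑ m ∈ range n, c m := by
    rw [sum_eq_sum_pairWeight, ← Fin.sum_univ_eq_sum_range]
    simp only [hcf]
  have h2 : ∀ m < n, 2 ≤ c m := fun m hm => hcf ⟨m, hm⟩ ▸ hf.two_le_pairWeight _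
  have hlight : ∀ m < n, c m < 3 → 0 < m ∧ m + 1 < n ∧ (3 ≤ c (m - 1) ∨ 3 ≤ c (m + 1)) := by
    intro m hm hcm
    obtain ⟨j, k, hj, hk, h3⟩ :=
      hf.pathGraph_exists_heavy_neighbor ⟨m, hm⟩ (hcf ⟨m, hm⟩ ▸ hcm)
    rw [← hcf j, ← hcf k] at h3
    change j.val + 1 = m at hj
    change m + 1 = k.val at hk
    refine ⟨by omega, by omega, ?_⟩
    rwa [show m - 1 = j.val by omega, show m + 1 = k.val by omega]
  obtain ⟨k, rfl⟩ : ∃ k, n = k + 1 := ⟨n - 1, by omega⟩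
  have h0 : 3 ≤ c 0 := by
    by_contra h
    have := hlight 0 (by omega) (by omega)
    omega
  have htail : (7 * k + 2) / 3 ≤ ∑ i ∈ range k, c (i + 1) := by
    refine seven_mul_add_two_div_three_le_sum_range (fun i hi => h2 _ (by omega)) ?_ ?_
    · intro i hi
      show 3 ≤ c (i + 1) ∨ 3 ≤ c (i + 2) ∨ 3 ≤ c (i + 3)
      by_contra! h
      obtain ⟨-, -, h3⟩ := hlight (i + 2) (by omega) h.2.1
      simp only [show i + 2 - 1 = i + 1 by omega, show i + 2 + 1 = i + 3 by omega] at h3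
      omega
    · intro hk
      by_contra h
      have := hlight (k - 1 + 1) (by omega) (by omega)
      omega
  rw [hsum, sum_range_succ']
  split_ifs <;> omega

end IsRDRD

def pathSpine (n i : ℕ) : ℕ := if i % 3 = 0 ∨ (i + 1 = n ∧ n % 3 = 2) then 2 else 0

def pathPendant (n i : ℕ) : ℕ :=
  if i % 3 = 0 ∨ (i + 1 = n ∧ n % 3 = 2) then 1 else if i + 1 = n then 3 else 2

lemma isRDRD_pathSpine_pathPendant (n : ℕ) :
    IsRDRD (corona (pathGraph n) (⊥ : SimpleGraph (Fin 1)))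
      (Sum.elim (fun i => pathSpine n i) fun x => pathPendant n x.1) := by
  refine isRDRD_corona_sumElim (s := fun i : Fin n => pathSpine n i)
    (p := fun i : Fin n => pathPendant n i) ?_ ?_ ?_ ?_ ?_ ?_
  all_goals intro i; have := i.isLt; simp only [pathSpine, pathPendant]
  iterate 4 split_ifs <;> omega
  all_goals
    intro hi
    replace hi : i.val % 3 ≠ 0 ∧ ¬(i.val + 1 = n ∧ n % 3 = 2) := by split_ifs at hi; omega
  · by_cases hlast : i.val + 1 = n
    · left
      split_ifs <;> omega
    · right
      refine ⟨by split_ifs <;> omega, ?_⟩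
      rcases (by omega : i.val % 3 = 1 ∨ i.val % 3 = 2) with h1 | h1
      · exact ⟨⟨i.val - 1, by omega⟩, pathGraph_adj.2 (.inr (Nat.sub_add_cancel (by omega))),
          if_pos (by dsimp only; omega)⟩
      · exact ⟨⟨i.val + 1, by omega⟩, pathGraph_adj.2 (.inl rfl), if_pos (by dsimp only; omega)⟩
  · rcases (by omega : i.val % 3 = 1 ∨ i.val % 3 = 2) with h1 | h1
    · exact ⟨⟨i.val + 1, by omega⟩, pathGraph_adj.2 (.inl rfl), if_neg (by dsimp only; omega)⟩
    · exact ⟨⟨i.val - 1, by omega⟩, pathGraph_adj.2 (.inr (Nat.sub_add_cancel (by omega))),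
        if_neg (by dsimp only; omega)⟩

lemma sum_range_pathSpine_add_pathPendant {n : ℕ} (hn : 1 ≤ n) :
    ∑ m ∈ range n, (pathSpine n m + pathPendant n m) =
      if n % 3 = 1 then (7 * n + 2) / 3 else (7 * n + 2) / 3 + 1 := by
  obtain ⟨k, rfl⟩ : ∃ k, n = k + 1 := ⟨n - 1, by omega⟩
  have hinit : ∀ m ∈ range k, pathSpine (k + 1) m + pathPendant (k + 1) m =
      if m % 3 = 0 then 3 else 2 := by
    intro m hm
    rw [mem_range] at hm
    simp only [pathSpine, pathPendant]
    split_ifs <;> omega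
  have hlast : pathSpine (k + 1) k + pathPendant (k + 1) k = 3 := by
    simp only [pathSpine, pathPendant]
    split_ifs <;> omega
  rw [sum_range_succ, sum_congr rfl hinit, sum_range_ite_mod_three, hlast]
  split_ifs <;> omega

theorem stmt17 (n : ℕ) (hn : 1 ≤ n) :
    gammaRdR (corona (SimpleGraph.pathGraph n) (⊥ : SimpleGraph (Fin 1))) =
      if n % 3 = 1 then (7 * n + 2) / 3 else (7 * n + 2) / 3 + 1 := by
  refine gammaRdR_eq_of_forall_le ⟨_, isRDRD_pathSpine_pathPendant n, ?_⟩
    fun f hf => hf.pathGraph_le_sum hn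
  rw [sum_eq_sum_pairWeight, ← sum_range_pathSpine_add_pathPendant hn,
    ← Fin.sum_univ_eq_sum_range (fun m => pathSpine n m + pathPendant n m)]
  rfl
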